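/- arXiv:0906.0434 — 2 statements merged into one kernel-verified Lean document; each statement's English description precedes it below -/
import Mathlib

section
/- Suppose y1 ≥ y2 and y1 − y2 ≤ λ. Then (θ1, θ2) = ((y1 + y2)/2, (y1 + y2)/2) is the unique global minimizer over ℝ² of the two-pixel TV objective Q_TV(θ1, θ2) = (y1 − θ1)² + (y2 − θ2)² + λ|θ1 − θ2|. -/
/-!
Expanding about the mean `m = (y1 + y2) / 2`, the objective is `Q_TV(m, m)` plus the squared
distance from `(θ1, θ2)` to `(m, m)` plus `λ|θ1 - θ2| - (y1 - y2)(θ1 - θ2)`. The last term is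
nonnegative as soon as `|y1 - y2| ≤ λ`, so the squared distance makes `(m, m)` the strict minimizer.
-/

/-- The two-pixel TV objective `Q_TV(θ1, θ2)`. -/
noncomputable def tvQ (lam y1 y2 θ1 θ2 : ℝ) : ℝ :=
  (y1 - θ1) ^ 2 + (y2 - θ2) ^ 2 + lam * |θ1 - θ2|

lemma tvQ_eq_tvQ_mean_add (lam y1 y2 θ1 θ2 : ℝ) :
    tvQ lam y1 y2 θ1 θ2 =
      tvQ lam y1 y2 ((y1 + y2) / 2) ((y1 + y2) / 2)
        + ((θ1 - (y1 + y2) / 2) ^ 2 + (θ2 - (y1 + y2) / 2) ^ 2)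
        + (lam * |θ1 - θ2| - (y1 - y2) * (θ1 - θ2)) := by
  simp only [tvQ, sub_self, abs_zero, mul_zero]
  ring

lemma sq_sub_add_sq_sub_pos_of_ne {a b c d : ℝ} (h : (a, b) ≠ (c, d)) :
    0 < (a - c) ^ 2 + (b - d) ^ 2 := by
  rcases not_and_or.mp (Prod.mk_inj.not.mp h) with hac | hbd
  · have : 0 < (a - c) ^ 2 := sq_pos_of_ne_zero (sub_ne_zero.mpr hac)
    positivity
  · have : 0 < (b - d) ^ 2 := sq_pos_of_ne_zero (sub_ne_zero.mpr hbd)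
    positivity

lemma mul_le_mul_abs_of_abs_le {c lam : ℝ} (hc : |c| ≤ lam) (t : ℝ) : c * t ≤ lam * |t| :=
  calc c * t ≤ |c * t| := le_abs_self _
    _ = |c| * |t| := abs_mul c t
    _ ≤ lam * |t| := mul_le_mul_of_nonneg_right hc (abs_nonneg t)

theorem tvQ_mean_lt_of_abs_sub_le {lam y1 y2 : ℝ} (hgap : |y1 - y2| ≤ lam) {θ1 θ2 : ℝ}
    (hne : (θ1, θ2) ≠ ((y1 + y2) / 2, (y1 + y2) / 2)) :
    tvQ lam y1 y2 ((y1 + y2) / 2) ((y1 + y2) / 2) < tvQ lam y1 y2 θ1 θ2 := by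
  have hdist := sq_sub_add_sq_sub_pos_of_ne hne
  have hTV := mul_le_mul_abs_of_abs_le hgap (θ1 - θ2)
  rw [tvQ_eq_tvQ_mean_add lam y1 y2 θ1 θ2]
  linarith

theorem tv_two_pixel_small_gap_minimizer_general
    (lam y1 y2 : ℝ)
    (hy : y2 ≤ y1) (hgap : y1 - y2 ≤ lam) :
    ∀ θ1 θ2 : ℝ, (θ1, θ2) ≠ ((y1 + y2) / 2, (y1 + y2) / 2) →
      tvQ lam y1 y2 ((y1 + y2) / 2) ((y1 + y2) / 2) < tvQ lam y1 y2 θ1 θ2 := by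
  intro θ1 θ2 hne
  have habs : |y1 - y2| ≤ lam := by rwa [abs_of_nonneg (sub_nonneg.mpr hy)]
  exact tvQ_mean_lt_of_abs_sub_le habs hne

/-- If `y1 ≥ y2` and `y1 − y2 ≤ λ`, then `((y1+y2)/2, (y1+y2)/2)` is the unique global
minimizer of the two-pixel TV objective `Q_TV`. -/
theorem tv_two_pixel_small_gap_minimizer
    (lam y1 y2 : ℝ) (hlam : 0 < lam)
    (hy : y2 ≤ y1) (hgap : y1 - y2 ≤ lam) :
    ∀ θ1 θ2 : ℝ, (θ1, θ2) ≠ ((y1 + y2) / 2, (y1 + y2) / 2) →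
      tvQ lam y1 y2 ((y1 + y2) / 2) ((y1 + y2) / 2) < tvQ lam y1 y2 θ1 θ2 :=
  tv_two_pixel_small_gap_minimizer_general lam y1 y2 hy hgap
end

section
/- If y1 − y2 > aλ, then Q((y1 + y2)/2, (y1 + y2)/2) = (y1 − y2)²/2 > (a + 1)λ²/2 = Q(y1, y2); in particular, any global minimizer of the two-pixel SCAD objective Q must satisfy θ1 ≠ θ2. -/
/-- The SCAD penalty function `p_λ` with parameters `a` and `lam = λ`. -/
noncomputable def scadPen (a lam θ : ℝ) : ℝ :=
  if θ ≤ lam then lam * θ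
  else if θ ≤ a * lam then (2 * a * lam * θ - θ ^ 2 - lam ^ 2) / (2 * (a - 1))
  else (a + 1) * lam ^ 2 / 2

/-- The derivative `p'_λ` of the SCAD penalty (with the convention `p'_λ(0) = λ`). -/
noncomputable def scadDeriv (a lam θ : ℝ) : ℝ :=
  if θ ≤ lam then lam
  else if θ ≤ a * lam then (a * lam - θ) / (a - 1)
  else 0

/-- The two-pixel SCAD objective `Q(θ1, θ2)`. -/
noncomputable def scadQ (a lam y1 y2 θ1 θ2 : ℝ) : ℝ :=
  (y1 - θ1) ^ 2 + (y2 - θ2) ^ 2 + scadPen a lam |θ1 - θ2|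

/-!
On the diagonal the penalty vanishes, so `Q(t, t)` is the least-squares error of fitting both
pixels by one value, which is at least `(y₁ - y₂)²/2` (attained at the mean). At the data point
itself `Q(y₁, y₂) = p_λ(y₁ - y₂)`, which for a gap beyond `aλ` is the SCAD plateau
`(a+1)λ²/2 < a²λ²/2 < (y₁ - y₂)²/2`, so no diagonal point can be a global minimizer.
-/

section ScadPen

variable {a lam : ℝ}

theorem scadPen_zero (hlam : 0 ≤ lam) : scadPen a lam 0 = 0 := by
  simp [scadPen, hlam]

theorem scadPen_of_mul_lt (ha : 1 ≤ a) (hlam : 0 ≤ lam) {θ : ℝ} (hθ : a * lam < θ) :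
    scadPen a lam θ = (a + 1) * lam ^ 2 / 2 := by
  have hlam_le : lam ≤ a * lam := le_mul_of_one_le_left hlam ha
  rw [scadPen, if_neg (by linarith), if_neg hθ.not_ge]

theorem add_one_mul_sq_div_two_lt_sq_div_two (ha : 2 ≤ a) (hlam : 0 ≤ lam) {d : ℝ}
    (hd : a * lam < d) :
    (a + 1) * lam ^ 2 / 2 < d ^ 2 / 2 := by
  have hsq : (a * lam) ^ 2 < d ^ 2 := by
    have : 0 ≤ a * lam := by positivity
    nlinarith
  nlinarith [mul_nonneg (by nlinarith : (0 : ℝ) ≤ a ^ 2 - a - 1) (sq_nonneg lam)]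

end ScadPen

section ScadQ

variable {a lam y1 y2 : ℝ}

theorem scadQ_diag (hlam : 0 ≤ lam) (t : ℝ) :
    scadQ a lam y1 y2 t t = (y1 - t) ^ 2 + (y2 - t) ^ 2 := by
  simp [scadQ, scadPen_zero hlam]

theorem scadQ_diag_midpoint (hlam : 0 ≤ lam) :
    scadQ a lam y1 y2 ((y1 + y2) / 2) ((y1 + y2) / 2) = (y1 - y2) ^ 2 / 2 := by
  rw [scadQ_diag hlam]
  ring

theorem sq_sub_div_two_le_scadQ_diag (hlam : 0 ≤ lam) (t : ℝ) :
    (y1 - y2) ^ 2 / 2 ≤ scadQ a lam y1 y2 t t := by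
  rw [scadQ_diag hlam]
  nlinarith [sq_nonneg (y1 + y2 - 2 * t)]

theorem scadQ_data (ha : 1 ≤ a) (hlam : 0 ≤ lam) (hgap : a * lam < y1 - y2) :
    scadQ a lam y1 y2 y1 y2 = (a + 1) * lam ^ 2 / 2 := by
  have hpos : 0 < y1 - y2 := lt_of_le_of_lt (by positivity) hgap
  simp only [scadQ, sub_self, abs_of_pos hpos, scadPen_of_mul_lt ha hlam hgap]
  ring

end ScadQ

/-- If `y1 − y2 > aλ`, then `Q((y1+y2)/2, (y1+y2)/2) = (y1 − y2)²/2 > (a+1)λ²/2 = Q(y1, y2)`;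
in particular any global minimizer of `Q` satisfies `θ1 ≠ θ2`. -/
theorem scad_two_pixel_no_diagonal_min
    (a lam y1 y2 : ℝ) (ha : 2 < a) (hlam : 0 < lam)
    (hgap : a * lam < y1 - y2) :
    scadQ a lam y1 y2 ((y1 + y2) / 2) ((y1 + y2) / 2) = (y1 - y2) ^ 2 / 2 ∧
    (y1 - y2) ^ 2 / 2 > (a + 1) * lam ^ 2 / 2 ∧
    (a + 1) * lam ^ 2 / 2 = scadQ a lam y1 y2 y1 y2 ∧
    (∀ θ1 θ2 : ℝ, (∀ t1 t2 : ℝ, scadQ a lam y1 y2 θ1 θ2 ≤ scadQ a lam y1 y2 t1 t2) →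
        θ1 ≠ θ2) := by
  have hdata := scadQ_data (by linarith) hlam.le hgap
  have hplateau := add_one_mul_sq_div_two_lt_sq_div_two ha.le hlam.le hgap
  refine ⟨scadQ_diag_midpoint hlam.le, hplateau, hdata.symm, ?_⟩
  rintro θ θ' hmin rfl
  have hdiag := sq_sub_div_two_le_scadQ_diag (a := a) (y1 := y1) (y2 := y2) hlam.le θ
  linarith [hmin y1 y2]
end
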